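/- Bipartite canonical Ramsey theorem: for every n ∈ ℕ there exists N ∈ ℕ such that for every function χ : [N] × [N] → C into an arbitrary set C, there exist subsets X, Y ⊆ [N], each of size n, such that one of the following holds for all x, x' ∈ X and y, y' ∈ Y: (1) χ(x,y) = χ(x',y'); (2) χ(x,y) = χ(x',y') ↔ x = x'; (3) χ(x,y) = χ(x',y') ↔ y = y'; (4) χ(x,y) = χ(x',y') ↔ (x = x' ∧ y = y'). -/

import Mathlib

/-!
By Ramsey's theorem for 3- and 4-tuples we may pass to a set `S` on which the pattern of
coincidences among the colours `χ (a, b)`, `a < b`, of a few points depends only on their relative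
order. Choosing `X` entirely below `Y` inside `S`, the colour is then either constant or injective
along every row, and likewise along every column; these two alternatives give the four canonical
types. If rows are injective, a coincidence `χ (x, y) = χ (x', y')` with `x ≠ x'`, `y ≠ y'` would,
by homogeneity and a fifth point of `S`, produce a coincidence inside a row.

Ramsey's theorem for tuples is proved in the Erdős–Rado way: first find a large set on which the
colour of a tuple depends only on its least element, then apply the pigeonhole principle.
-/

universe u

section Ramsey

variable {α β : Type*} [LinearOrder β] {k : ℕ}

def IsHomogeneous (f : (Fin k → β) → α) (S : Finset β) : Prop :=
  ∃ c, ∀ p, StrictMono p → (∀ i, p i ∈ S) → f p = c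

def IsMinHomogeneous (f : (Fin (k + 1) → β) → α) (S : Finset β) : Prop :=
  ∃ g : β → α, ∀ p, StrictMono p → (∀ i, p i ∈ S) → f p = g (p 0)

theorem IsHomogeneous.mono {f : (Fin k → β) → α} {S T : Finset β} (h : IsHomogeneous f S)
    (hTS : T ⊆ S) : IsHomogeneous f T :=
  let ⟨c, hc⟩ := h
  ⟨c, fun p hp hpT => hc p hp fun i => hTS (hpT i)⟩

theorem IsMinHomogeneous.insert {f : (Fin (k + 1) → β) → α} {S : Finset β} {a : β}
    (hS : IsMinHomogeneous f S) (haS : ∀ x ∈ S, a < x)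
    (hcons : IsHomogeneous (fun q => f (Fin.cons a q)) S) :
    IsMinHomogeneous f (insert a S) := by
  obtain ⟨g, hg⟩ := hS
  obtain ⟨γ, hγ⟩ := hcons
  refine ⟨Function.update g a γ, fun p hp hpS => ?_⟩
  have mem_of_ne {i} (hi : p i ≠ a) : p i ∈ S := (Finset.mem_insert.mp (hpS i)).resolve_left hi
  by_cases h0 : p 0 = a
  · have htail : ∀ i, Fin.tail p i ∈ S := fun i =>
      mem_of_ne (h0 ▸ hp (Fin.succ_pos i)).ne'
    calc f p = f (Fin.cons a (Fin.tail p)) := by rw [← h0, Fin.cons_self_tail]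
      _ = γ := hγ _ (hp.comp Fin.strictMono_succ) htail
      _ = Function.update g a γ (p 0) := by rw [h0, Function.update_self]
  · have hpa : ∀ i, a < p i := fun i =>
      (haS _ (mem_of_ne h0)).trans_le (hp.monotone (Fin.zero_le i))
    rw [hg p hp fun i => mem_of_ne (hpa i).ne', Function.update_of_ne h0]

theorem IsMinHomogeneous.exists_isHomogeneous [Fintype α] {f : (Fin (k + 1) → β) → α}
    {S : Finset β} (hS : IsMinHomogeneous f S) {m : ℕ} (hm : Fintype.card α * m < S.card) :
    ∃ T ⊆ S, T.card = m ∧ IsHomogeneous f T := by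
  classical
  obtain ⟨g, hg⟩ := hS
  obtain ⟨γ, -, hγ⟩ := Finset.exists_lt_card_fiber_of_mul_lt_card_of_maps_to
    (f := g) (fun x _ => Finset.mem_univ (g x)) hm
  obtain ⟨T, hT, rfl⟩ := Finset.exists_subset_card_eq hγ.le
  have hTS : T ⊆ S := hT.trans (Finset.filter_subset _ _)
  refine ⟨T, hTS, rfl, γ, fun p hp hpT => ?_⟩
  rw [hg p hp fun i => hTS (hpT i)]
  exact (Finset.mem_filter.mp (hT (hpT 0))).2

end Ramsey

theorem exists_isMinHomogeneous {α : Type*} {k : ℕ}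
    (hk : ∀ m, ∃ N, ∀ (β : Type u) [LinearOrder β] (f : (Fin k → β) → α) (V : Finset β),
      N ≤ V.card → ∃ S ⊆ V, S.card = m ∧ IsHomogeneous f S) (t : ℕ) :
    ∃ N, ∀ (β : Type u) [LinearOrder β] (f : (Fin (k + 1) → β) → α) (V : Finset β),
      N ≤ V.card → ∃ S ⊆ V, S.card = t ∧ IsMinHomogeneous f S := by
  induction t with
  | zero =>
    exact ⟨0, fun β _ f V _ => ⟨∅, Finset.empty_subset _, rfl, fun b => f fun _ => b,
      fun p _ hp => absurd (hp 0) (Finset.notMem_empty _)⟩⟩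
  | succ t ih =>
    obtain ⟨Nt, hNt⟩ := ih
    obtain ⟨NR, hNR⟩ := hk Nt
    refine ⟨NR + 1, fun β _ f V hV => ?_⟩
    have hV0 : V.Nonempty := Finset.card_pos.mp (by omega)
    set a := V.min' hV0
    have haV : a ∈ V := V.min'_mem hV0
    obtain ⟨W, hWV, hW, hWhom⟩ := hNR β (fun q => f (Fin.cons a q)) (V.erase a)
      (by rw [Finset.card_erase_of_mem haV]; omega)
    obtain ⟨S, hSW, hS, hSmin⟩ := hNt β f W hW.ge
    have haS : ∀ x ∈ S, a < x := fun x hx =>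
      have hx' := hWV (hSW hx)
      (V.min'_le x (Finset.mem_of_mem_erase hx')).lt_of_ne (Finset.ne_of_mem_erase hx').symm
    refine ⟨insert a S, Finset.insert_subset haV ((hSW.trans hWV).trans (V.erase_subset a)),
      ?_, hSmin.insert haS (hWhom.mono hSW)⟩
    rw [Finset.card_insert_of_notMem fun h => (haS a h).false, hS]

theorem exists_isHomogeneous (α : Type*) [Finite α] (k m : ℕ) :
    ∃ N, ∀ (β : Type u) [LinearOrder β] (f : (Fin k → β) → α) (V : Finset β),
      N ≤ V.card → ∃ S ⊆ V, S.card = m ∧ IsHomogeneous f S := by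
  induction k generalizing m with
  | zero =>
    refine ⟨m, fun β _ f V hV => ?_⟩
    obtain ⟨S, hSV, hS⟩ := Finset.exists_subset_card_eq hV
    exact ⟨S, hSV, hS, f Fin.elim0, fun p _ _ => congrArg f (Subsingleton.elim _ _)⟩
  | succ k ih =>
    have := Fintype.ofFinite α
    obtain ⟨N, hN⟩ := exists_isMinHomogeneous ih (Fintype.card α * m + 1)
    refine ⟨N, fun β _ f V hV => ?_⟩
    obtain ⟨S, hSV, hS, hSmin⟩ := hN β f V hV
    obtain ⟨T, hTS, hT, hThom⟩ := hSmin.exists_isHomogeneous (m := m) (by omega)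
    exact ⟨T, hTS.trans hSV, hT, hThom⟩

section Canonical

variable {β C : Type*} [LinearOrder β] {χ : β × β → C} {S : Finset β}

def eqPattern (χ : β × β → C) {k : ℕ} (p : Fin k → β) : Fin k → Fin k → Fin k → Fin k → Prop :=
  fun i j i' j' => χ (p i, p j) = χ (p i', p j')

def IsCanonical (χ : β × β → C) (X Y : Finset β) : Prop :=
  (∀ x ∈ X, ∀ x' ∈ X, ∀ y ∈ Y, ∀ y' ∈ Y, χ (x, y) = χ (x', y')) ∨
  (∀ x ∈ X, ∀ x' ∈ X, ∀ y ∈ Y, ∀ y' ∈ Y, (χ (x, y) = χ (x', y') ↔ x = x')) ∨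
  (∀ x ∈ X, ∀ x' ∈ X, ∀ y ∈ Y, ∀ y' ∈ Y, (χ (x, y) = χ (x', y') ↔ y = y')) ∨
  (∀ x ∈ X, ∀ x' ∈ X, ∀ y ∈ Y, ∀ y' ∈ Y, (χ (x, y) = χ (x', y') ↔ (x = x' ∧ y = y')))

theorem IsHomogeneous.eqPattern_forall_or {k : ℕ} (h : IsHomogeneous (eqPattern χ (k := k)) S)
    (i j i' j' : Fin k) :
    (∀ p : Fin k → β, StrictMono p → (∀ l, p l ∈ S) → χ (p i, p j) = χ (p i', p j')) ∨
    (∀ p : Fin k → β, StrictMono p → (∀ l, p l ∈ S) → χ (p i, p j) ≠ χ (p i', p j')) := by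
  obtain ⟨c, hc⟩ := h
  have hpc : ∀ p : Fin k → β, StrictMono p → (∀ l, p l ∈ S) →
      (χ (p i, p j) = χ (p i', p j') ↔ c i j i' j') := fun p hp hpS =>
    (congrFun₂ (congrFun₂ (hc p hp hpS) i j) i' j').to_iff
  by_cases hcij : c i j i' j'
  · exact Or.inl fun p hp hpS => (hpc p hp hpS).mpr hcij
  · exact Or.inr fun p hp hpS => mt (hpc p hp hpS).mp hcij

theorem IsHomogeneous.rows_const_or_injective (h : IsHomogeneous (eqPattern χ (k := 3)) S) :
    (∀ x ∈ S, ∀ y ∈ S, ∀ y' ∈ S, x < y → x < y' → χ (x, y) = χ (x, y')) ∨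
    (∀ x ∈ S, ∀ y ∈ S, ∀ y' ∈ S, x < y → x < y' → (χ (x, y) = χ (x, y') ↔ y = y')) := by
  refine (h.eqPattern_forall_or 0 1 0 2).imp (fun hall x hx y hy y' hy' hxy hxy' => ?_)
    (fun hall x hx y hy y' hy' hxy hxy' => ⟨fun heq => ?_, fun hyy => hyy ▸ rfl⟩)
  · rcases lt_trichotomy y y' with hyy | rfl | hyy
    · exact hall ![x, y, y'] (by simp [*]) (by simp [Fin.forall_fin_succ, *])
    · rfl
    · exact (hall ![x, y', y] (by simp [*]) (by simp [Fin.forall_fin_succ, *])).symm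
  · by_contra hyy
    rcases lt_or_gt_of_ne hyy with hyy | hyy
    · exact hall ![x, y, y'] (by simp [*]) (by simp [Fin.forall_fin_succ, *]) heq
    · exact hall ![x, y', y] (by simp [*]) (by simp [Fin.forall_fin_succ, *]) heq.symm

theorem IsHomogeneous.cols_const_or_injective (h : IsHomogeneous (eqPattern χ (k := 3)) S) :
    (∀ x ∈ S, ∀ x' ∈ S, ∀ y ∈ S, x < y → x' < y → χ (x, y) = χ (x', y)) ∨
    (∀ x ∈ S, ∀ x' ∈ S, ∀ y ∈ S, x < y → x' < y → (χ (x, y) = χ (x', y) ↔ x = x')) := by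
  refine (h.eqPattern_forall_or 0 2 1 2).imp (fun hall x hx x' hx' y hy hxy hx'y => ?_)
    (fun hall x hx x' hx' y hy hxy hx'y => ⟨fun heq => ?_, fun hxx => hxx ▸ rfl⟩)
  · rcases lt_trichotomy x x' with hxx | rfl | hxx
    · exact hall ![x, x', y] (by simp [*]) (by simp [Fin.forall_fin_succ, *])
    · rfl
    · exact (hall ![x', x, y] (by simp [*]) (by simp [Fin.forall_fin_succ, *])).symm
  · by_contra hxx
    rcases lt_or_gt_of_ne hxx with hxx | hxx
    · exact hall ![x, x', y] (by simp [*]) (by simp [Fin.forall_fin_succ, *]) heq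
    · exact hall ![x', x, y] (by simp [*]) (by simp [Fin.forall_fin_succ, *]) heq.symm

theorem IsHomogeneous.ne_of_ne_of_ne (h : IsHomogeneous (eqPattern χ (k := 4)) S)
    (hS : 5 ≤ S.card)
    (hrow : ∀ x ∈ S, ∀ y ∈ S, ∀ y' ∈ S, x < y → x < y' → (χ (x, y) = χ (x, y') ↔ y = y'))
    {x x' y y' : β} (hx : x ∈ S) (hx' : x' ∈ S) (hy : y ∈ S) (hy' : y' ∈ S)
    (hxy : x < y) (hxy' : x < y') (hx'y : x' < y) (hx'y' : x' < y')
    (hxx : x ≠ x') (hyy : y ≠ y') : χ (x, y) ≠ χ (x', y') := by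
  obtain ⟨T, hTS, hT⟩ := Finset.exists_subset_card_eq hS
  set s := T.orderEmbOfFin hT
  have hs : ∀ i, s i ∈ S := fun i => hTS (T.orderEmbOfFin_mem hT i)
  have h34 : s 3 ≠ s 4 := (s.strictMono (by decide)).ne
  have hrow34 : ∀ i : Fin 5, i < 3 → (χ (s i, s 3) = χ (s i, s 4) ↔ s 3 = s 4) := fun i hi =>
    hrow _ (hs i) _ (hs 3) _ (hs 4) (s.strictMono hi) (s.strictMono (hi.trans (by decide)))
  have hs0123 : StrictMono ![s 0, s 1, s 2, s 3] := by simp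
  have hs0124 : StrictMono ![s 0, s 1, s 2, s 4] := by simp
  -- a coincidence across two rows would spread, by homogeneity, to a coincidence inside one row
  have diag : ∀ p : Fin 4 → β, StrictMono p → (∀ l, p l ∈ S) → χ (p 0, p 2) ≠ χ (p 1, p 3) :=
    (h.eqPattern_forall_or 0 2 1 3).resolve_left fun hall => h34 <| (hrow34 1 (by decide)).mp <|
      (hall _ hs0123 (by simp [Fin.forall_fin_succ, hs])).symm.trans
        (hall _ hs0124 (by simp [Fin.forall_fin_succ, hs]))
  have antidiag : ∀ p : Fin 4 → β, StrictMono p → (∀ l, p l ∈ S) → χ (p 0, p 3) ≠ χ (p 1, p 2) :=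
    (h.eqPattern_forall_or 0 3 1 2).resolve_left fun hall => h34 <| (hrow34 0 (by decide)).mp <|
      (hall _ hs0123 (by simp [Fin.forall_fin_succ, hs])).trans
        (hall _ hs0124 (by simp [Fin.forall_fin_succ, hs])).symm
  wlog hlt : x < x' generalizing x x' y y'
  · exact Ne.symm (this hx' hx hy' hy hx'y' hx'y hxy' hxy hxx.symm hyy.symm
      ((lt_or_gt_of_ne hxx).resolve_left hlt))
  rcases lt_or_gt_of_ne hyy with hyy | hyy
  · exact diag ![x, x', y, y'] (by simp [*]) (by simp [Fin.forall_fin_succ, *])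
  · exact antidiag ![x, x', y', y] (by simp [*]) (by simp [Fin.forall_fin_succ, *])

theorem isCanonical_of_isHomogeneous (h₃ : IsHomogeneous (eqPattern χ (k := 3)) S)
    (h₄ : IsHomogeneous (eqPattern χ (k := 4)) S) (hS : 5 ≤ S.card) {X Y : Finset β}
    (hXS : X ⊆ S) (hYS : Y ⊆ S) (hXY : ∀ x ∈ X, ∀ y ∈ Y, x < y) : IsCanonical χ X Y := by
  rcases h₃.rows_const_or_injective with hrow | hrow <;>
    rcases h₃.cols_const_or_injective with hcol | hcol
  · refine Or.inl fun x hx x' hx' y hy y' hy' => ?_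
    rw [hrow x (hXS hx) y (hYS hy) y' (hYS hy') (hXY x hx y hy) (hXY x hx y' hy')]
    exact hcol x (hXS hx) x' (hXS hx') y' (hYS hy') (hXY x hx y' hy') (hXY x' hx' y' hy')
  · refine Or.inr <| Or.inl fun x hx x' hx' y hy y' hy' => ?_
    rw [hrow x (hXS hx) y (hYS hy) y' (hYS hy') (hXY x hx y hy) (hXY x hx y' hy')]
    exact hcol x (hXS hx) x' (hXS hx') y' (hYS hy') (hXY x hx y' hy') (hXY x' hx' y' hy')
  · refine Or.inr <| Or.inr <| Or.inl fun x hx x' hx' y hy y' hy' => ?_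
    rw [hcol x (hXS hx) x' (hXS hx') y (hYS hy) (hXY x hx y hy) (hXY x' hx' y hy)]
    exact hrow x' (hXS hx') y (hYS hy) y' (hYS hy') (hXY x' hx' y hy) (hXY x' hx' y' hy')
  · refine Or.inr <| Or.inr <| Or.inr fun x hx x' hx' y hy y' hy' => ⟨fun heq => ?_, ?_⟩
    · by_cases hxx : x = x'
      · subst hxx
        exact ⟨rfl, (hrow x (hXS hx) y (hYS hy) y' (hYS hy') (hXY x hx y hy) (hXY x hx y' hy')).mp heq⟩
      by_cases hyy : y = y'
      · subst hyy
        exact absurd ((hcol x (hXS hx) x' (hXS hx') y (hYS hy) (hXY x hx y hy)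
          (hXY x' hx' y hy)).mp heq) hxx
      exact absurd heq (h₄.ne_of_ne_of_ne hS hrow (hXS hx) (hXS hx') (hYS hy) (hYS hy')
        (hXY x hx y hy) (hXY x hx y' hy') (hXY x' hx' y hy) (hXY x' hx' y' hy') hxx hyy)
    · rintro ⟨rfl, rfl⟩
      rfl

end Canonical

theorem Finset.exists_subsets_card_eq_forall_lt {β : Type*} [LinearOrder β] {S : Finset β}
    {n m : ℕ} (h : n + m ≤ S.card) :
    ∃ X ⊆ S, ∃ Y ⊆ S, X.card = n ∧ Y.card = m ∧ ∀ x ∈ X, ∀ y ∈ Y, x < y := by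
  set e := (S.orderEmbOfFin rfl).toEmbedding
  have he : ∀ i, e i ∈ S := S.orderEmbOfFin_mem rfl
  refine ⟨univ.map ((Fin.castLEEmb (Nat.le_of_add_right_le h)).trans e), ?_,
    univ.map ((Fin.natAddEmb n).trans ((Fin.castLEEmb h).trans e)), ?_, by simp, by simp, ?_⟩
  · simp [subset_iff, he]
  · simp [subset_iff, he]
  · simp only [mem_map, mem_univ, true_and, forall_exists_index]
    rintro _ i rfl _ j rfl
    exact (S.orderEmbOfFin rfl).strictMono (by simp [Fin.lt_def]; omega)

/-- Bipartite canonical Ramsey theorem: for every `n` there is `N` such that for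
every colouring `χ : [N] × [N] → C` into an arbitrary set of colours there are
subsets `X, Y` of size `n` on which `χ` is canonical of one of the four types. -/
theorem stmt2 (n : ℕ) :
    ∃ N : ℕ, ∀ (C : Type) (χ : Fin N × Fin N → C),
      ∃ X Y : Finset (Fin N), X.card = n ∧ Y.card = n ∧
        ((∀ x ∈ X, ∀ x' ∈ X, ∀ y ∈ Y, ∀ y' ∈ Y, χ (x, y) = χ (x', y')) ∨
         (∀ x ∈ X, ∀ x' ∈ X, ∀ y ∈ Y, ∀ y' ∈ Y, (χ (x, y) = χ (x', y') ↔ x = x')) ∨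
         (∀ x ∈ X, ∀ x' ∈ X, ∀ y ∈ Y, ∀ y' ∈ Y, (χ (x, y) = χ (x', y') ↔ y = y')) ∨
         (∀ x ∈ X, ∀ x' ∈ X, ∀ y ∈ Y, ∀ y' ∈ Y,
            (χ (x, y) = χ (x', y') ↔ (x = x' ∧ y = y')))) := by
  obtain ⟨N₃, hN₃⟩ := exists_isHomogeneous (Fin 3 → Fin 3 → Fin 3 → Fin 3 → Prop) 3 (2 * n + 5)
  obtain ⟨N, hN⟩ := exists_isHomogeneous (Fin 4 → Fin 4 → Fin 4 → Fin 4 → Prop) 4 N₃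
  refine ⟨N, fun C χ => ?_⟩
  obtain ⟨S₄, -, hS₄, h₄⟩ := hN (Fin N) (eqPattern χ) Finset.univ (by simp)
  obtain ⟨S, hSS₄, hS, h₃⟩ := hN₃ (Fin N) (eqPattern χ) S₄ hS₄.ge
  obtain ⟨X, hXS, Y, hYS, hX, hY, hXY⟩ :=
    Finset.exists_subsets_card_eq_forall_lt (by omega : n + n ≤ S.card)
  exact ⟨X, Y, hX, hY, isCanonical_of_isHomogeneous h₃ (h₄.mono hSS₄) (by omega) hXS hYS hXY⟩
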